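/- Suppose the finite p-group G has a self-centralizing normal cyclic subgroup A. If a 𝕂G-irrep ψ overlaps with a 𝕂A-irrep ξ, then ψ is a faithful representation of G if and only if ξ is a faithful representation of A. -/
import Mathlib


open scoped Classical

noncomputable section

namespace Genotype

variable {k : Type} [Field k] {G : Type} [Group G]

/-- The subfield generated (over the prime field `ℚ`) by the values of a function,
e.g. the field `ℚ[ψ]` generated by the values of a character. -/
def charField {X : Type} {k : Type} [Field k] (f : X → k) : Subfield k :=
  Subfield.closure (Set.range f)

theorem mem_charField {X : Type} {k : Type} [Field k] (f : X → k) (x : X) :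
    f x ∈ charField f :=
  Subfield.subset_closure ⟨x, rfl⟩

/-- Two functions (typically characters of irreps over possibly different
characteristic-zero fields) are Galois conjugate: there is a Galois extension `M` of `ℚ`
containing (copies of) all their values and a field automorphism `α` of `M` with
`α (f g) = f' g` for all `g`. -/
def IsGaloisConj {k l : Type} [Field k] [Field l] {G : Type}
    (f : G → k) (f' : G → l) : Prop :=
  ∃ (M : Type) (_ : Field M) (_ : Algebra ℚ M), IsGalois ℚ M ∧
    ∃ (i : charField f →+* M) (j : charField f' →+* M) (α : M ≃+* M),
      ∀ g : G, α (i ⟨f g, mem_charField f g⟩) = j ⟨f' g, mem_charField f' g⟩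

/-- Irreducibility of a finite-dimensional representation. -/
def IsIrr (V : FDRep k G) : Prop :=
  Nontrivial V ∧
    ∀ U : Submodule k V, (∀ g : G, ∀ x ∈ U, V.ρ g x ∈ U) → U = ⊥ ∨ U = ⊤

/-- Faithfulness of a representation. -/
def IsFaithfulRep (V : FDRep k G) : Prop := Function.Injective V.ρ

/-- `f` (the character of an irrep) occurs in the character `c`,
i.e. `c = f + (character of some representation)`. -/
def CharOccurs (f c : G → k) : Prop :=
  ∃ W : FDRep k G, c = f + W.character

/-- `f` (the character of an irrep) occurs in `c` with multiplicity exactly `m`. -/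
def CharMult (f c : G → k) (m : ℕ) : Prop :=
  ∃ W : FDRep k G, c = m • f + W.character ∧ ¬ CharOccurs f W.character

/-- `f` is the character of an irreducible representation. -/
def IsIrrChar (f : G → k) : Prop := ∃ V : FDRep k G, IsIrr V ∧ f = V.character

/-- Restriction of a character to a subgroup. -/
def resChar (H : Subgroup G) (c : G → k) : H → k := fun h => c h

/-- The induced character `ind_H^G f`. -/
def indChar (H : Subgroup G) (f : H → k) : G → k := fun g =>
  (Nat.card H : k)⁻¹ *
    ∑ᶠ x : G, if h : x⁻¹ * g * x ∈ H then f ⟨x⁻¹ * g * x, h⟩ else 0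

/-- The character `cψ` (of a `kG`-irrep) is tightly induced from the character `cφ`
(of a `kH`-irrep): `cψ` is the induced character of `cφ`, `cφ` occurs with multiplicity
exactly `1` in the restriction of `cψ`, and no Galois conjugate of `cφ` other than `cφ`
itself occurs in the restriction of `cψ`. -/
def TightInd (H : Subgroup G) (cψ : G → k) (cφ : H → k) : Prop :=
  cψ = indChar H cφ ∧ CharMult cφ (resChar H cψ) 1 ∧
    ∀ cφ' : H → k, IsIrrChar cφ' → IsGaloisConj cφ cφ' →
      CharOccurs cφ' (resChar H cψ) → cφ' = cφ

/-- Tight induction from a subquotient `H/K` of `G`: tight induction from `H`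
of the inflation. -/
def TightIndSub (H : Subgroup G) (K : Subgroup H) [K.Normal]
    (cψ : G → k) (cφ : (H ⧸ K) → k) : Prop :=
  TightInd H cψ (fun h => cφ (QuotientGroup.mk h))

/-- A group is Roquette if every normal abelian subgroup of it is cyclic. -/
def IsRoquette (P : Type) [Group P] : Prop :=
  ∀ A : Subgroup P, A.Normal → (∀ x ∈ A, ∀ y ∈ A, x * y = y * x) → IsCyclic A

/-- `χ` is the rational form `ψ_ℚ` of `V`: a rational irrep such that `V` occurs in the
scalar extension `k ⊗_ℚ χ`. -/
def IsRatForm [CharZero k] (χ : FDRep ℚ G) (V : FDRep k G) : Prop :=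
  IsIrr χ ∧ CharOccurs V.character (fun g => algebraMap ℚ k (χ.character g))

/-- Irreps over possibly different characteristic-zero fields are quasiconjugate if they
determine the same rational irrep. -/
def Quasiconj {k l : Type} [Field k] [Field l] [CharZero k] [CharZero l] {G : Type} [Group G]
    (V : FDRep k G) (W : FDRep l G) : Prop :=
  ∃ χ : FDRep ℚ G, IsRatForm χ V ∧ IsRatForm χ W

end Genotype

namespace Genotype


section Aux

open Module Representation LinearMap

lemma sum_trace_eq {k : Type} [Field k] [CharZero k] {B : Type} [Group B] [Fintype B]
    {V : Type} [AddCommGroup V] [Module k V] [FiniteDimensional k V]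
    (ρ : Representation k B V) :
    ∑ b : B, LinearMap.trace k V (ρ b) =
      (Fintype.card B : k) * (Module.finrank k ρ.invariants : k) := by
  have h0 : (Fintype.card B : k) ≠ 0 := Nat.cast_ne_zero.mpr Fintype.card_ne_zero
  haveI := invertibleOfNonzero h0
  have h : ⅟(Fintype.card B : k) • ∑ b : B, LinearMap.trace k V (ρ b) =
      (Module.finrank k ρ.invariants : k) := by
    rw [← (Representation.isProj_averageMap ρ).trace]
    simp [Representation.averageMap, GroupAlgebra.average, _root_.map_sum,
      Finset.smul_sum, Finset.mul_sum]
  calc ∑ b : B, LinearMap.trace k V (ρ b)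
      = ((Fintype.card B : k) * ⅟(Fintype.card B : k)) • ∑ b : B, LinearMap.trace k V (ρ b) := by
        rw [mul_invOf_self, one_smul]
    _ = (Fintype.card B : k) * (⅟(Fintype.card B : k) • ∑ b : B, LinearMap.trace k V (ρ b)) := by
        rw [mul_smul, smul_eq_mul]
    _ = _ := by rw [h]

lemma sum_char_subgroup {k : Type} [Field k] [CharZero k] {B : Type} [Group B] [Fintype B]
    (N : Subgroup B) (V : FDRep k B) :
    ∑ n : ↥N, V.character ↑n =
      (Fintype.card ↥N : k)
        * (Module.finrank k ↥(Representation.invariants (V.ρ.comp N.subtype)) : k) :=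
  sum_trace_eq (V.ρ.comp N.subtype)

lemma rho_eq_one_of_invariants_top {k : Type} [Field k] {B : Type} [Group B]
    {V : Type} [AddCommGroup V] [Module k V]
    {ρ : Representation k B V} (h : ρ.invariants = ⊤) (b : B) : ρ b = 1 := by
  ext v
  have := (Submodule.eq_top_iff'.mp h v) b
  simpa using this

lemma char_eq_finrank_of_rho_eq_one {k : Type} [Field k] {B : Type} [Group B]
    (V : FDRep k B) {b : B} (h : V.ρ b = 1) :
    V.character b = (Module.finrank k V : k) := by
  show LinearMap.trace k V (V.ρ b) = _
  rw [h, LinearMap.trace_one]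

lemma lemL {k : Type} [Field k] [CharZero k] {B : Type} [Group B] [Fintype B]
    (N : Subgroup B) (U W : FDRep k B)
    (h : ∀ n : ↥N, U.character ↑n + W.character ↑n
        = (Module.finrank k U : k) + (Module.finrank k W : k)) :
    ∀ n ∈ N, U.ρ n = 1 := by
  have hU := sum_char_subgroup N U
  have hW := sum_char_subgroup N W
  have hsum : ∑ n : ↥N, (U.character ↑n + W.character ↑n)
      = (Fintype.card ↥N : k) * ((Module.finrank k U : k) + (Module.finrank k W : k)) := by
    simp only [h, Finset.sum_const, Finset.card_univ, nsmul_eq_mul]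
  rw [Finset.sum_add_distrib, hU, hW, ← mul_add] at hsum
  have hc : (Fintype.card ↥N : k) ≠ 0 := Nat.cast_ne_zero.mpr Fintype.card_ne_zero
  have hk : ((Module.finrank k ↥(Representation.invariants (U.ρ.comp N.subtype))
      + Module.finrank k ↥(Representation.invariants (W.ρ.comp N.subtype)) : ℕ) : k)
      = ((Module.finrank k U + Module.finrank k W : ℕ) : k) := by
    push_cast
    exact mul_left_cancel₀ hc hsum
  have hnat := Nat.cast_inj.mp hk
  have h1 : Module.finrank k ↥(Representation.invariants (U.ρ.comp N.subtype))
      ≤ Module.finrank k U := Submodule.finrank_le _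
  have h2 : Module.finrank k ↥(Representation.invariants (W.ρ.comp N.subtype))
      ≤ Module.finrank k W := Submodule.finrank_le _
  have hEq : Module.finrank k ↥(Representation.invariants (U.ρ.comp N.subtype))
      = Module.finrank k U := by omega
  have htop : Representation.invariants (U.ρ.comp N.subtype) = ⊤ :=
    Submodule.eq_top_of_finrank_eq hEq
  intro n hn
  exact rho_eq_one_of_invariants_top htop ⟨n, hn⟩

end Aux

/-- Suppose the finite `p`-group `G` has a self-centralizing normal cyclic subgroup `A`.
If a `𝕂G`-irrep `ψ` overlaps with a `𝕂A`-irrep `ξ` (i.e. `ξ` occurs in `res_A^G ψ`),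
then `ψ` is faithful if and only if `ξ` is faithful. -/
theorem faithful_iff_overlap_faithful (p : ℕ) (hp : p.Prime)
    (G : Type) [Group G] [Fintype G] (hG : IsPGroup p G)
    (k : Type) [Field k] [CharZero k]
    (A : Subgroup G) (hAn : A.Normal) (hAc : IsCyclic A)
    (hsc : Subgroup.centralizer (A : Set G) = A)
    (ψ : FDRep k G) (hψ : IsIrr ψ) (ξ : FDRep k A) (hξ : IsIrr ξ)
    (hov : CharOccurs ξ.character (resChar A ψ.character)) :
    IsFaithfulRep ψ ↔ IsFaithfulRep ξ := by
  haveI := Fact.mk hp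
  haveI : Fintype ↥A := Fintype.ofFinite ↥A
  haveI : IsCyclic ↥A := hAc
  obtain ⟨W, hWeq⟩ := hov
  have hres : ∀ b : ↥A, ψ.character ↑b = ξ.character b + W.character b := fun b =>
    congrFun hWeq b
  have hdim : (Module.finrank k ψ : k)
      = (Module.finrank k ξ : k) + (Module.finrank k W : k) := by
    have h1 := hres 1
    simpa using h1
  have hcommA : ∀ u v : ↥A, Commute u v := by
    obtain ⟨gen, hgen⟩ := hAc.exists_generator
    intro u v
    obtain ⟨mu, hu⟩ := Subgroup.mem_zpowers_iff.mp (hgen u)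
    obtain ⟨mv, hv⟩ := Subgroup.mem_zpowers_iff.mp (hgen v)
    rw [← hu, ← hv]
    exact (Commute.refl gen).zpow_zpow mu mv
  constructor
  · -- ψ faithful → ξ faithful
    intro hf
    show Function.Injective ξ.ρ
    rw [injective_iff_map_eq_one]
    intro a ha
    by_contra hne
    -- produce an element of order p killed by ξ
    obtain ⟨m, hm⟩ := (hG.to_subgroup A) a
    obtain ⟨j, _hjm, hoa⟩ := (Nat.dvd_prime_pow hp).mp (orderOf_dvd_of_pow_eq_one hm)
    have hj1 : 1 ≤ j := by
      rcases Nat.eq_zero_or_pos j with h0 | h0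
      · exfalso
        rw [h0, pow_zero] at hoa
        exact hne (orderOf_eq_one_iff.mp hoa)
      · exact h0
    set x : ↥A := a ^ (p ^ (j - 1)) with hxdef
    have hox : orderOf x = p := by
      rw [hxdef, orderOf_pow, hoa, Nat.gcd_eq_right (pow_dvd_pow p (by omega)),
        Nat.pow_div (by omega) hp.pos]
      have hjj : j - (j - 1) = 1 := by omega
      rw [hjj, pow_one]
    have hxρ : ξ.ρ x = 1 := by rw [hxdef, map_pow, ha, one_pow]
    have hx1 : x ≠ 1 := by
      intro h
      rw [h, orderOf_one] at hox
      exact hp.one_lt.ne' hox.symm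
    -- all p-torsion of A lies in ⟨x⟩
    have hsub : ∀ b : ↥A, b ^ p = 1 → b ∈ Subgroup.zpowers x := by
      intro b hb
      by_contra hbx
      have hcard := IsCyclic.card_pow_eq_one_le (α := ↥A) hp.pos
      classical
      set S' : Finset ↥A := Set.toFinset (Subgroup.zpowers x : Set ↥A) with hS'def
      have hS'card : S'.card = p := by
        rw [hS'def, Set.toFinset_card]
        simpa using (Fintype.card_zpowers.trans hox)
      have hins : insert b S' ⊆ Finset.univ.filter (fun a : ↥A => a ^ p = 1) := by
        intro c hc
        rcases Finset.mem_insert.mp hc with rfl | hc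
        · simp [hb]
        · have hcz : c ∈ Subgroup.zpowers x := by
            rw [hS'def, Set.mem_toFinset] at hc
            exact hc
          have hdvd : orderOf c ∣ p := hox ▸ orderOf_dvd_of_mem_zpowers hcz
          simp [orderOf_dvd_iff_pow_eq_one.mp hdvd]
      have hle := Finset.card_le_card hins
      rw [Finset.card_insert_of_notMem (by
        rw [hS'def, Set.mem_toFinset]
        exact hbx), hS'card] at hle
      have hle2 : (Finset.univ.filter (fun a : ↥A => a ^ p = 1)).card ≤ p := by
        exact_mod_cast hcard
      omega
    have hker : ∀ b : ↥A, b ^ p = 1 → ξ.ρ b = 1 := by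
      intro b hb
      obtain ⟨n, hn⟩ := mem_powers_iff_mem_zpowers.mpr (hsub b hb)
      rw [← hn, map_pow, hxρ, one_pow]
    -- the subgroup of p-torsion elements of A
    let Ω' : Subgroup ↥A :=
      { carrier := {b : ↥A | b ^ p = 1}
        one_mem' := one_pow p
        mul_mem' := by
          intro u v hu hv
          simp only [Set.mem_setOf_eq] at *
          rw [(hcommA u v).mul_pow, hu, hv, one_mul]
        inv_mem' := by
          intro u hu
          simp only [Set.mem_setOf_eq] at *
          rw [inv_pow, hu, inv_one] }
    have hxΩ : x ∈ Ω' := by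
      show x ^ p = 1
      rw [← hox]
      exact pow_orderOf_eq_one x
    -- counting: invariants of ψ under Ω' are nonzero
    set ρΩ : Representation k ↥Ω' ψ := ψ.ρ.comp (A.subtype.comp Ω'.subtype) with hρΩ
    set S : Submodule k ψ := Representation.invariants ρΩ with hSdef
    have hsumS := sum_trace_eq ρΩ
    have hterm : ∀ n : ↥Ω', LinearMap.trace k ψ (ρΩ n)
        = (Module.finrank k ξ : k) + W.character ↑n := by
      intro n
      have h1 : LinearMap.trace k ψ (ρΩ n) = ψ.character ((n : ↥A) : G) := rfl
      rw [h1, hres, char_eq_finrank_of_rho_eq_one ξ (hker ↑n n.2)]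
    have hWΩ := sum_char_subgroup Ω' W
    have hS1 : (Fintype.card ↥Ω' : k) * (Module.finrank k S : k)
        = (Fintype.card ↥Ω' : k) * ((Module.finrank k ξ
          + Module.finrank k ↥(Representation.invariants (W.ρ.comp Ω'.subtype)) : ℕ) : k) := by
      rw [← hsumS]
      calc ∑ n : ↥Ω', LinearMap.trace k ψ (ρΩ n)
          = ∑ n : ↥Ω', ((Module.finrank k ξ : k) + W.character ↑n) := by
            exact Finset.sum_congr rfl fun n _ => hterm n
        _ = (Fintype.card ↥Ω' : k) * (Module.finrank k ξ : k)
            + ∑ n : ↥Ω', W.character ↑n := by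
            rw [Finset.sum_add_distrib]
            simp [Finset.card_univ, nsmul_eq_mul]
        _ = _ := by
            rw [hWΩ]
            push_cast
            ring_nf
    have hcΩ : (Fintype.card ↥Ω' : k) ≠ 0 := Nat.cast_ne_zero.mpr Fintype.card_ne_zero
    have hSrank : Module.finrank k S = Module.finrank k ξ
        + Module.finrank k ↥(Representation.invariants (W.ρ.comp Ω'.subtype)) := by
      have := mul_left_cancel₀ hcΩ hS1
      exact_mod_cast this
    haveI : Nontrivial ξ := hξ.1
    have hSne : S ≠ ⊥ := by
      intro h
      have h0 : Module.finrank k S = 0 := by rw [h]; exact finrank_bot k ψ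
      have hpos : 0 < Module.finrank k ξ := Module.finrank_pos
      omega
    -- S is G-stable
    have hstab : ∀ g : G, ∀ v ∈ S, ψ.ρ g v ∈ S := by
      intro g v hv
      intro n
      have hnA : ((n : ↥A) : G) ∈ A := (n : ↥A).2
      have hmA : g⁻¹ * ((n : ↥A) : G) * g ∈ A := by
        have := hAn.conj_mem _ hnA g⁻¹
        rwa [inv_inv] at this
      have hnp : (((n : ↥A) : G)) ^ p = 1 := by
        have hn2 : ((n : ↥A)) ^ p = 1 := n.2
        calc (((n : ↥A) : G)) ^ p = (((n : ↥A) ^ p : ↥A) : G) := by push_cast; ring_nf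
          _ = ((1 : ↥A) : G) := by rw [hn2]
          _ = 1 := OneMemClass.coe_one A
      have hmp : (g⁻¹ * ((n : ↥A) : G) * g) ^ p = 1 := by
        have : (g⁻¹ * ((n : ↥A) : G) * g⁻¹⁻¹) ^ p = g⁻¹ * (((n : ↥A) : G)) ^ p * g⁻¹⁻¹ :=
          conj_pow
        rw [inv_inv] at this
        rw [this, hnp, mul_one, inv_mul_cancel]
      have hmΩ : (⟨g⁻¹ * ((n : ↥A) : G) * g, hmA⟩ : ↥A) ∈ Ω' := by
        show (⟨g⁻¹ * ((n : ↥A) : G) * g, hmA⟩ : ↥A) ^ p = 1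
        apply Subtype.ext
        push_cast
        exact hmp
      have hv' := hv ⟨⟨g⁻¹ * ((n : ↥A) : G) * g, hmA⟩, hmΩ⟩
      show ψ.ρ ((n : ↥A) : G) (ψ.ρ g v) = ψ.ρ g v
      have hmul : ((n : ↥A) : G) * g = g * (g⁻¹ * ((n : ↥A) : G) * g) := by group
      calc ψ.ρ ((n : ↥A) : G) (ψ.ρ g v) = ψ.ρ (((n : ↥A) : G) * g) v := by
            rw [map_mul]; rfl
        _ = ψ.ρ (g * (g⁻¹ * ((n : ↥A) : G) * g)) v := by rw [hmul]
        _ = ψ.ρ g (ψ.ρ (g⁻¹ * ((n : ↥A) : G) * g) v) := by rw [map_mul]; rfl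
        _ = ψ.ρ g v := by
            have : ψ.ρ (g⁻¹ * ((n : ↥A) : G) * g) v = v := hv'
            rw [this]
    rcases hψ.2 S hstab with hbot | htop
    · exact hSne hbot
    · have hxψ : ψ.ρ ((x : ↥A) : G) = 1 :=
        rho_eq_one_of_invariants_top (ρ := ρΩ) htop ⟨x, hxΩ⟩
      have : ((x : ↥A) : G) = 1 := hf (by rw [hxψ, map_one])
      exact hx1 (OneMemClass.coe_eq_one.mp this)
  · -- ξ faithful → ψ faithful
    intro hf
    show Function.Injective ψ.ρ
    rw [injective_iff_map_eq_one]
    intro g hg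
    by_contra hgne
    -- kernel of ψ as a normal subgroup of G
    let Kψ : Subgroup G :=
      { carrier := {g : G | ψ.ρ g = 1}
        one_mem' := map_one ψ.ρ
        mul_mem' := by
          intro a b ha hb
          simp only [Set.mem_setOf_eq] at *
          rw [map_mul, ha, hb, mul_one]
        inv_mem' := by
          intro a ha
          simp only [Set.mem_setOf_eq] at *
          have : ψ.ρ a⁻¹ * ψ.ρ a = 1 := by rw [← map_mul, inv_mul_cancel, map_one]
          rwa [ha, mul_one] at this }
    haveI hKn : Kψ.Normal := by
      constructor
      intro n hn g'
      show ψ.ρ (g' * n * g'⁻¹) = 1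
      have hn' : ψ.ρ n = 1 := hn
      rw [map_mul, map_mul, hn', mul_one, ← map_mul, mul_inv_cancel, map_one]
    haveI : Nontrivial ↥Kψ := by
      refine ⟨⟨⟨g, hg⟩, 1, ?_⟩⟩
      intro h
      exact hgne (Subtype.ext_iff.mp h)
    obtain ⟨n, hn0, hcard⟩ := ((hG.to_subgroup Kψ).nontrivial_iff_card).mp inferInstance
    have hdvd : p ∣ Nat.card ↥Kψ := hcard ▸ dvd_pow_self p hn0.ne'
    have h1fix : (1 : ↥Kψ) ∈ MulAction.fixedPoints (ConjAct G) ↥Kψ := by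
      intro c
      apply Subtype.ext
      rw [ConjAct.Subgroup.val_conj_smul]
      simp [ConjAct.smul_def]
    obtain ⟨b, hbfix, hb1⟩ :=
      (hG.of_equiv ConjAct.toConjAct).exists_fixed_point_of_prime_dvd_card_of_fixed_point
        ↥Kψ hdvd h1fix
    have hbc : (↑b : G) ∈ Subgroup.center G := by
      rw [Subgroup.mem_center_iff]
      intro g'
      have hb' := hbfix (ConjAct.toConjAct g')
      have hcoe : g' * (↑b : G) * g'⁻¹ = ↑b := by
        have := congrArg (Subtype.val) hb'
        rw [ConjAct.Subgroup.val_conj_smul] at this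
        simpa [ConjAct.smul_def] using this
      calc g' * (↑b : G) = g' * (↑b : G) * g'⁻¹ * g' := by group
        _ = (↑b : G) * g' := by rw [hcoe]
    have hbA : (↑b : G) ∈ A := by
      have := Subgroup.center_le_centralizer (A : Set G) hbc
      rwa [hsc] at this
    set za : ↥A := ⟨↑b, hbA⟩ with hza
    have hKz : ∀ n : ↥(Subgroup.zpowers za), (((n : ↥A)) : G) ∈ Kψ := by
      rintro ⟨n, hn⟩
      obtain ⟨m, hm⟩ := Subgroup.mem_zpowers_iff.mp hn
      have : ((n : ↥A) : G) = ((↑b : G)) ^ m := by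
        rw [← hm]
        push_cast
        rfl
      rw [this]
      exact Kψ.zpow_mem b.2 m
    have key := lemL (Subgroup.zpowers za) ξ W (fun n => by
      rw [← hres ↑n]
      have hmem : (((n : ↥A)) : G) ∈ Kψ := hKz n
      have hone : ψ.ρ (((n : ↥A)) : G) = 1 := hmem
      rw [char_eq_finrank_of_rho_eq_one ψ hone]
      exact hdim)
    have hξz : ξ.ρ za = 1 := key za (Subgroup.mem_zpowers za)
    have hza1 : za = 1 := hf (by rw [hξz, map_one])
    apply hb1
    apply Subtype.ext
    exact (Subtype.ext_iff.mp hza1).symm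

end Genotype
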